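/- arXiv:2508.14714 — 3 statements merged into one kernel-verified Lean document; each statement's English description precedes it below -/
import Mathlib

section
/- Let n ≥ 4 be an integer, let z : ZMod n → ℂ be injective, and let {i,j} be a chord. Then the primitive u-relation holds identically: u_{ij}(z) + ∏_{e ∈ E, e crosses {i,j}} u_e(z) = 1. -/
namespace M0n

/-- `{i, j}` is a chord of the `n`-gon: `j ∉ {i-1, i, i+1}`. -/
def IsChord (n : ℕ) (p : Sym2 (ZMod n)) : Prop :=
  ∀ i j : ZMod n, p = s(i, j) → j ≠ i - 1 ∧ j ≠ i ∧ j ≠ i + 1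

instance (n : ℕ) [NeZero n] : DecidablePred (IsChord n) := fun p =>
  inferInstanceAs (Decidable (∀ i j : ZMod n, p = s(i, j) → j ≠ i - 1 ∧ j ≠ i ∧ j ≠ i + 1))

/-- The finite set `E` of chords of the `n`-gon. -/
def chords (n : ℕ) [NeZero n] : Finset (Sym2 (ZMod n)) :=
  Finset.univ.filter (IsChord n)

/-- `x` lies in the cyclic open interval `{i+1, …, j-1}` from `i` to `j`. -/
def CycBtw {n : ℕ} (i x j : ZMod n) : Prop :=
  0 < (x - i).val ∧ (x - i).val < (j - i).val

instance {n : ℕ} (i x j : ZMod n) : Decidable (CycBtw i x j) :=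
  inferInstanceAs (Decidable (0 < (x - i).val ∧ (x - i).val < (j - i).val))

/-- Two chords cross: exactly one endpoint of `q` lies in the cyclic open interval
from `i` to `j`, for every ordered representation `(i, j)` of `p`. -/
def Crosses (n : ℕ) (p q : Sym2 (ZMod n)) : Prop :=
  ∀ i j k l : ZMod n, p = s(i, j) → q = s(k, l) → Xor' (CycBtw i k j) (CycBtw i l j)

instance (n : ℕ) [NeZero n] (p q : Sym2 (ZMod n)) : Decidable (Crosses n p q) :=
  inferInstanceAs (Decidable (∀ i j k l : ZMod n,
    p = s(i, j) → q = s(k, l) →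
      ((CycBtw i k j ∧ ¬CycBtw i l j) ∨ (CycBtw i l j ∧ ¬CycBtw i k j))))

/-- The dihedral coordinate (cross-ratio)
`u_{ij}(z) = ((z i - z (j+1)) (z (i+1) - z j)) / ((z i - z j) (z (i+1) - z (j+1)))`,
well defined on unordered pairs. -/
def u {n : ℕ} {K : Type*} [Field K] (z : ZMod n → K) : Sym2 (ZMod n) → K :=
  Sym2.lift ⟨fun i j =>
    ((z i - z (j + 1)) * (z (i + 1) - z j)) / ((z i - z j) * (z (i + 1) - z (j + 1))), by
      intro i j
      have h1 : (z i - z (j + 1)) * (z (i + 1) - z j)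
          = (z j - z (i + 1)) * (z (j + 1) - z i) := by ring
      have h2 : (z i - z j) * (z (i + 1) - z (j + 1))
          = (z j - z i) * (z (j + 1) - z (i + 1)) := by ring
      dsimp only
      rw [h1, h2]⟩

/-- The cyclic interval `{a, a+1, …, a+m-1}` in `ZMod n`. -/
def cycInt {n : ℕ} (a : ZMod n) (m : ℕ) : Finset (ZMod n) :=
  (Finset.range m).image fun t : ℕ => a + (t : ZMod n)

/-- A partition of `ZMod n` into four nonempty cyclic intervals `A, B, C, D`
appearing in this cyclic order. -/
structure CyclicFourPartition (n : ℕ) where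
  a : ZMod n
  p : ℕ
  q : ℕ
  r : ℕ
  t : ℕ
  hp : 0 < p
  hq : 0 < q
  hr : 0 < r
  ht : 0 < t
  hsum : p + q + r + t = n

namespace CyclicFourPartition

variable {n : ℕ} (P : CyclicFourPartition n)

def A : Finset (ZMod n) := cycInt P.a P.p
def B : Finset (ZMod n) := cycInt (P.a + (P.p : ZMod n)) P.q
def C : Finset (ZMod n) := cycInt (P.a + (P.p : ZMod n) + (P.q : ZMod n)) P.r
def D : Finset (ZMod n) := cycInt (P.a + (P.p : ZMod n) + (P.q : ZMod n) + (P.r : ZMod n)) P.t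

end CyclicFourPartition

/-- A sign pattern is consistent if it does not contradict any extended u-relation:
for every cyclic 4-partition `(A,B,C,D)`, one of the two products of signs is `1`. -/
def Consistent (n : ℕ) (s : Sym2 (ZMod n) → ℤ) : Prop :=
  ∀ P : CyclicFourPartition n,
    (∏ x ∈ P.A, ∏ y ∈ P.C, s s(x, y)) = 1 ∨ (∏ x ∈ P.B, ∏ y ∈ P.D, s s(x, y)) = 1

/-- A sign pattern is realizable if it is the sign vector of the dihedral coordinates
of some injective real configuration. -/
def Realizable (n : ℕ) [NeZero n] (s : Sym2 (ZMod n) → ℤ) : Prop :=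
  ∃ z : ZMod n → ℝ, Function.Injective z ∧ ∀ e ∈ chords n, Real.sign (u z e) = (s e : ℝ)

/-- The length of a chord `{i,j}`: `min (d, n - d)` where `d = (j - i).val`. -/
def chordLength (n : ℕ) (p : Sym2 (ZMod n)) : ℕ :=
  Sym2.lift ⟨fun i j => min (j - i).val (i - j).val, fun _ _ => min_comm _ _⟩ p

/-- `Neg z`: the number of negative chords of a real configuration. -/
noncomputable def negCount (n : ℕ) [NeZero n] (z : ZMod n → ℝ) : ℕ :=
  Set.ncard {e : Sym2 (ZMod n) | e ∈ chords n ∧ u z e < 0}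

/-- The set of real points of `M_{0,n}` in its dihedral embedding:
nowhere-zero real solutions of all primitive u-relations in `ℝ^E`. -/
def Vset (n : ℕ) [NeZero n] : Set ({e : Sym2 (ZMod n) // e ∈ chords n} → ℝ) :=
  {w | (∀ c, w c ≠ 0) ∧ ∀ c,
    w c + ∏ e ∈ Finset.univ.filter
        (fun e : {e : Sym2 (ZMod n) // e ∈ chords n} => Crosses n e.1 c.1), w e = 1}

/-- The part `M_{0,n}(ℝ_s)` of `V` in the open orthant given by the sign pattern `s`. -/
def VsSet (n : ℕ) [NeZero n] (s : Sym2 (ZMod n) → ℤ) :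
    Set ({e : Sym2 (ZMod n) // e ∈ chords n} → ℝ) :=
  {w ∈ Vset n | ∀ c : {e : Sym2 (ZMod n) // e ∈ chords n}, Real.sign (w c) = (s c.1 : ℝ)}

/-!
Put `w t = z (i + t)` and `j = i + d`. The chords crossing `{i, j}` are the `{i + a, i + b}` with
`0 < a < d < b < n`. For fixed `a`, `u_{ab}` is the ratio of consecutive terms (in `b`) of
`(w a - w b) / (w (a + 1) - w b)`, so the product over `b` telescopes; what is left is again a ratio
of consecutive terms in `a`, so the product over `a` telescopes too, down to a single cross-ratio
of `w 0, w 1, w d, w (d + 1)` (using `w n = w 0`). The relation then becomes the four-point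
identity `u + u' = 1` for cross-ratios.
-/

theorem prod_Ico_div₀ {K : Type*} [CommGroupWithZero K] (f : ℕ → K) {m n : ℕ} (hmn : m ≤ n)
    (hf : ∀ t ∈ Finset.Icc m n, f t ≠ 0) :
    ∏ t ∈ Finset.Ico m n, f (t + 1) / f t = f n / f m := by
  induction n, hmn using Nat.le_induction with
  | base => rw [Finset.Ico_self, Finset.prod_empty, div_self (hf m (by simp))]
  | succ n hmn ih =>
    rw [Finset.prod_Ico_succ_top hmn,
      ih fun t ht => hf t (Finset.Icc_subset_Icc_right n.le_succ ht)]
    have : f n ≠ 0 := hf n (by simp [hmn])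
    field_simp

def crossRatioSeq {K : Type*} [Field K] (w : ℕ → K) (a b : ℕ) : K :=
  ((w a - w (b + 1)) * (w (a + 1) - w b)) / ((w a - w b) * (w (a + 1) - w (b + 1)))

theorem crossRatioSeq_eq_div {K : Type*} [Field K] (w : ℕ → K) (a b : ℕ) (hab : w a ≠ w b)
    (hab' : w (a + 1) ≠ w b) (hab'' : w (a + 1) ≠ w (b + 1)) :
    crossRatioSeq w a b =
      (w a - w (b + 1)) / (w (a + 1) - w (b + 1)) / ((w a - w b) / (w (a + 1) - w b)) := by
  have := sub_ne_zero.mpr hab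
  have := sub_ne_zero.mpr hab'
  have := sub_ne_zero.mpr hab''
  simp only [crossRatioSeq]
  field_simp

theorem prod_Ico_prod_Ico_crossRatioSeq {K : Type*} [Field K] (w : ℕ → K) {p q r s : ℕ}
    (hpq : p ≤ q) (hrs : r ≤ s) (hw : ∀ a b, p ≤ a → a ≤ q → r ≤ b → b ≤ s → w a ≠ w b) :
    ∏ a ∈ Finset.Ico p q, ∏ b ∈ Finset.Ico r s, crossRatioSeq w a b =
      ((w q - w r) * (w p - w s)) / ((w q - w s) * (w p - w r)) := by
  have hsub (a b : ℕ) (h : p ≤ a ∧ a ≤ q ∧ r ≤ b ∧ b ≤ s) : w a - w b ≠ 0 :=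
    sub_ne_zero.mpr (hw a b h.1 h.2.1 h.2.2.1 h.2.2.2)
  have inner : ∀ a ∈ Finset.Ico p q, ∏ b ∈ Finset.Ico r s, crossRatioSeq w a b =
      (w (a + 1) - w r) / (w (a + 1) - w s) / ((w a - w r) / (w a - w s)) := by
    intro a ha
    rw [Finset.mem_Ico] at ha
    have hr := hsub a r (by omega)
    have hs := hsub a s (by omega)
    have hr' := hsub (a + 1) r (by omega)
    have hs' := hsub (a + 1) s (by omega)
    calc ∏ b ∈ Finset.Ico r s, crossRatioSeq w a b
        = ∏ b ∈ Finset.Ico r s,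
            (w a - w (b + 1)) / (w (a + 1) - w (b + 1)) / ((w a - w b) / (w (a + 1) - w b)) :=
          Finset.prod_congr rfl fun b hb => by
            rw [Finset.mem_Ico] at hb
            exact crossRatioSeq_eq_div w a b (hw _ _ (by omega) (by omega) (by omega) (by omega))
              (hw _ _ (by omega) (by omega) (by omega) (by omega))
              (hw _ _ (by omega) (by omega) (by omega) (by omega))
      _ = (w a - w s) / (w (a + 1) - w s) / ((w a - w r) / (w (a + 1) - w r)) :=
          prod_Ico_div₀ (fun t => (w a - w t) / (w (a + 1) - w t)) hrs fun t ht => by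
            rw [Finset.mem_Icc] at ht
            exact div_ne_zero (hsub a t (by omega)) (hsub (a + 1) t (by omega))
      _ = _ := by field_simp
  rw [Finset.prod_congr rfl inner,
    prod_Ico_div₀ (fun t => (w t - w r) / (w t - w s)) hpq fun t ht => by
      rw [Finset.mem_Icc] at ht
      exact div_ne_zero (hsub t r (by omega)) (hsub t s (by omega))]
  have := hsub p s (by omega)
  have := hsub q s (by omega)
  field_simp

theorem cross_ratio_add_cross_ratio_eq_one {K : Type*} [Field K] {A B C D : K}
    (hAC : A ≠ C) (hBD : B ≠ D) :
    (A - D) * (B - C) / ((A - C) * (B - D)) + (C - D) * (B - A) / ((C - A) * (B - D)) = 1 := by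
  have := sub_ne_zero.mpr hAC
  have := sub_ne_zero.mpr hAC.symm
  have := sub_ne_zero.mpr hBD
  field_simp
  ring

section Polygon

variable {n : ℕ}

theorem u_add_natCast {K : Type*} [Field K] (z : ZMod n → K) (i : ZMod n) (a b : ℕ) :
    u z s(i + a, i + b) = crossRatioSeq (fun t : ℕ => z (i + t)) a b := by
  simp only [u, Sym2.lift_mk, crossRatioSeq, Nat.cast_add, Nat.cast_one, add_assoc]

theorem natCast_eq_natCast_iff_of_lt {a b : ℕ} (ha : a < n) (hb : b < n) :
    (a : ZMod n) = b ↔ a = b := by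
  rw [ZMod.natCast_eq_natCast_iff', Nat.mod_eq_of_lt ha, Nat.mod_eq_of_lt hb]

theorem natCast_ne_natCast_of_lt {a b : ℕ} (hab : a < b) (hba : b < a + n) :
    (a : ZMod n) ≠ b := by
  intro h
  have := Nat.le_of_dvd (by omega) ((Nat.modEq_iff_dvd' hab.le).mp
    ((ZMod.natCast_eq_natCast_iff a b n).mp h))
  omega

theorem val_natCast_sub_natCast [NeZero n] {a b : ℕ} (ha : a < n) (hb : b < n) :
    ((a : ZMod n) - b).val = if b ≤ a then a - b else a + n - b := by
  split_ifs with h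
  · rw [← Nat.cast_sub h, ZMod.val_cast_of_lt (by omega)]
  · rw [← ZMod.val_cast_of_lt (show a + n - b < n by omega), Nat.cast_sub (by omega),
      Nat.cast_add, ZMod.natCast_self, add_zero]

theorem isChord_mk_iff [NeZero n] {x y : ZMod n} :
    IsChord n s(x, y) ↔ 2 ≤ (y - x).val ∧ (y - x).val + 2 ≤ n := by
  have hchord : IsChord n s(x, y) ↔ y - x ≠ 0 ∧ y - x ≠ 1 ∧ y - x + 1 ≠ 0 := by
    refine ⟨fun h => ?_, fun ⟨h0, h1, h2⟩ x' y' hp => ?_⟩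
    · obtain ⟨hm, h0, h1⟩ := h x y rfl
      exact ⟨sub_ne_zero.mpr h0, fun e => h1 (by linear_combination e),
        fun e => hm (by linear_combination e)⟩
    · rcases Sym2.eq_iff.mp hp with ⟨rfl, rfl⟩ | ⟨rfl, rfl⟩
      · exact ⟨fun e => h2 (by linear_combination e), fun e => h0 (by linear_combination e),
          fun e => h1 (by linear_combination e)⟩
      · exact ⟨fun e => h1 (by linear_combination -e), fun e => h0 (by linear_combination -e),
          fun e => h2 (by linear_combination -e)⟩
  obtain ⟨m, hm, hv⟩ : ∃ m < n, y - x = m := ⟨_, ZMod.val_lt _, (ZMod.natCast_zmod_val _).symm⟩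
  rw [hchord, hv, ZMod.val_cast_of_lt hm]
  constructor
  · rintro ⟨h0, h1, h2⟩
    have : m ≠ 0 := by rintro rfl; exact h0 Nat.cast_zero
    have : m ≠ 1 := by rintro rfl; exact h1 Nat.cast_one
    have : m + 1 ≠ n := by
      intro h
      have : ((m + 1 : ℕ) : ZMod n) = 0 := by rw [h, ZMod.natCast_self]
      exact h2 (by exact_mod_cast this)
    omega
  · rintro ⟨h2, hn⟩
    have cast_ne {a b : ℕ} (ha : a < n) (hb : b < n) (hab : a ≠ b) : (a : ZMod n) ≠ b :=
      (natCast_eq_natCast_iff_of_lt ha hb).not.mpr hab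
    exact ⟨by exact_mod_cast cast_ne hm (b := 0) (by omega) (by omega),
      by exact_mod_cast cast_ne hm (b := 1) (by omega) (by omega),
      by exact_mod_cast cast_ne (a := m + 1) (b := 0) (by omega) (by omega) (by omega)⟩

theorem crosses_mk_iff {k l x y : ZMod n} :
    Crosses n s(k, l) s(x, y) ↔
      Xor (CycBtw k x l) (CycBtw k y l) ∧ Xor (CycBtw l x k) (CycBtw l y k) := by
  refine ⟨fun h => ⟨h k l x y rfl rfl, h l k x y Sym2.eq_swap rfl⟩, ?_⟩
  rintro ⟨hkl, hlk⟩ k' l' x' y' hp hq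
  rw [Sym2.eq_iff] at hp hq
  rcases hp with ⟨rfl, rfl⟩ | ⟨rfl, rfl⟩ <;> rcases hq with ⟨rfl, rfl⟩ | ⟨rfl, rfl⟩ <;>
    first | assumption | exact (_root_.xor_comm _ _).mp ‹_›

theorem crosses_add_natCast_iff [NeZero n] (i : ZMod n) {a b d : ℕ} (ha : a < n) (hb : b < n)
    (hd : d < n) :
    Crosses n s(i + a, i + b) s(i, i + d) ↔ (0 < a ∧ a < d ∧ d < b) ∨ (0 < b ∧ b < d ∧ d < a) := by
  have h0 : 0 < n := NeZero.pos n
  rw [show s(i, i + (d : ZMod n)) = s(i + ((0 : ℕ) : ZMod n), i + d) by simp, crosses_mk_iff]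
  simp only [CycBtw, add_sub_add_left_eq_sub, xor_def, val_natCast_sub_natCast, ha, hb, hd, h0]
  split_ifs <;> omega

theorem prod_filter_crosses {M : Type*} [CommMonoid M] [NeZero n] (f : Sym2 (ZMod n) → M)
    (i : ZMod n) {d : ℕ} (hd : d < n) :
    ∏ e ∈ (chords n).filter (fun e => Crosses n e s(i, i + d)), f e =
      ∏ a ∈ Finset.Ico 1 d, ∏ b ∈ Finset.Ico (d + 1) n, f s(i + a, i + b) := by
  have cancel {a b : ℕ} (ha : a < n) (hb : b < n) : i + (a : ZMod n) = i + b ↔ a = b := by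
    rw [add_right_inj, natCast_eq_natCast_iff_of_lt ha hb]
  have himage : (chords n).filter (fun e => Crosses n e s(i, i + d)) =
      (Finset.Ico 1 d ×ˢ Finset.Ico (d + 1) n).image fun ab => s(i + ab.1, i + ab.2) := by
    ext e
    induction e using Sym2.ind with | _ k l => ?_
    obtain ⟨a, ha, rfl⟩ : ∃ a < n, k = i + a := ⟨(k - i).val, ZMod.val_lt _, by simp⟩
    obtain ⟨b, hb, rfl⟩ : ∃ b < n, l = i + b := ⟨(l - i).val, ZMod.val_lt _, by simp⟩
    simp only [chords, Finset.mem_filter, Finset.mem_univ, true_and, isChord_mk_iff,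
      add_sub_add_left_eq_sub, val_natCast_sub_natCast hb ha, crosses_add_natCast_iff i ha hb hd,
      Finset.mem_image, Finset.mem_product, Finset.mem_Ico, Prod.exists]
    constructor
    · rintro ⟨-, ⟨h1, h2, h3⟩ | ⟨h1, h2, h3⟩⟩
      · exact ⟨a, b, by omega, rfl⟩
      · exact ⟨b, a, by omega, Sym2.eq_swap⟩
    · rintro ⟨a', b', h, heq⟩
      rcases Sym2.eq_iff.mp heq with ⟨e1, e2⟩ | ⟨e1, e2⟩ <;>
        rw [cancel (by omega) ‹_›] at e1 e2 <;> subst e1 e2 <;> split_ifs <;> omega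
  rw [himage, Finset.prod_image, Finset.prod_product]
  rintro ⟨a, b⟩ hab ⟨a', b'⟩ hab' heq
  simp only [Finset.coe_product, Set.mem_prod, Finset.mem_coe, Finset.mem_Ico] at hab hab'
  rcases Sym2.eq_iff.mp heq with ⟨e1, e2⟩ | ⟨e1, e2⟩ <;>
    rw [cancel (by omega) (by omega)] at e1 e2 <;> subst e1 e2 <;> first | rfl | omega

end Polygon

theorem primitive_u_relation_general (n : ℕ) [NeZero n] (z : ZMod n → ℂ)
    (hz : Function.Injective z) (i j : ZMod n) (hij : s(i, j) ∈ chords n) :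
    u z s(i, j) + ∏ e ∈ (chords n).filter (fun e => Crosses n e s(i, j)), u z e = 1 := by
  obtain ⟨d, hd, rfl⟩ : ∃ d < n, j = i + d := ⟨(j - i).val, ZMod.val_lt _, by simp⟩
  have hchord := isChord_mk_iff.mp (Finset.mem_filter.mp hij).2
  rw [add_sub_cancel_left, ZMod.val_cast_of_lt hd] at hchord
  have hw {a b : ℕ} (hab : a < b) (hba : b < a + n) : z (i + a) ≠ z (i + b) :=
    fun h => natCast_ne_natCast_of_lt hab hba (add_left_cancel (hz h))
  rw [prod_filter_crosses _ i hd]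
  simp only [u_add_natCast]
  rw [prod_Ico_prod_Ico_crossRatioSeq _ (by omega) (by omega)
      fun a b _ _ _ _ => hw (by omega) (by omega),
    show s(i, i + (d : ZMod n)) = s(i + ((0 : ℕ) : ZMod n), i + d) by simp, u_add_natCast,
    show z (i + (n : ZMod n)) = z (i + ((0 : ℕ) : ZMod n)) by simp]
  simp only [crossRatioSeq, zero_add]
  exact cross_ratio_add_cross_ratio_eq_one (hw (by omega) (by omega)) (hw (by omega) (by omega))

/-- For `n ≥ 4`, an injective `z : ZMod n → ℂ` and a chord `{i,j}`,
the primitive u-relation holds: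
`u_{ij}(z) + ∏_{e ∈ E, e crosses {i,j}} u_e(z) = 1`. -/
theorem primitive_u_relation (n : ℕ) [NeZero n] (hn : 4 ≤ n) (z : ZMod n → ℂ)
    (hz : Function.Injective z) (i j : ZMod n) (hij : s(i, j) ∈ chords n) :
    u z s(i, j) + ∏ e ∈ (chords n).filter (fun e => Crosses n e s(i, j)), u z e = 1 :=
  primitive_u_relation_general n z hz i j hij

end M0n
end

section
/- Let n ≥ 4 be an integer. The number of realizable sign patterns is (n−1)!/2; that is, 2 · #{s : E → {−1,1} | s is realizable} = (n−1)!. -/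
/-!
A configuration `z` puts the labels on the real line, and `u_{ij}(z) < 0` exactly when the
edges `{z i, z (i + 1)}` and `{z j, z (j + 1)}` of the closed polygon through `z 0, …, z (n - 1)`
cross, i.e. one pair separates the other. Hence the sign pattern only depends on the order of
the `z i`, and every realizable pattern comes from a permutation `σ` putting label `x` at
position `σ x`. Separation of positions in the cyclic order is invariant under rotations and
reflections, so the `2 n` permutations of a dihedral orbit give the same pattern.

Conversely, the edge crossings determine whether any pair of labels separates any other:
separation by a chord is additive mod 2 along a path of chords, and exactly one of the three
pairings of four points is separating. Separation determines which positions are adjacent, and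
an adjacency-preserving bijection of `ZMod n` is a rotation or a reflection. So the patterns are
in bijection with the `n! / (2 n)` dihedral orbits.
-/

namespace M0n

section Separation

variable {R : Type*} [CommRing R] [LinearOrder R]

/-- On a line, `{a, b}` separates `{c, d}` when exactly one of `c, d` lies strictly between
`a` and `b`. -/
def Separates (a b c d : R) : Prop := (c - a) * (c - b) * ((d - a) * (d - b)) < 0

lemma separates_comm_left (a b c d : R) : Separates a b c d ↔ Separates b a c d := by
  rw [Separates, Separates, show (c - a) * (c - b) * ((d - a) * (d - b))
    = (c - b) * (c - a) * ((d - b) * (d - a)) by ring]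

lemma separates_comm_right (a b c d : R) : Separates a b c d ↔ Separates a b d c := by
  rw [Separates, Separates, mul_comm]

lemma separates_comm (a b c d : R) : Separates a b c d ↔ Separates c d a b := by
  rw [Separates, Separates, show (c - a) * (c - b) * ((d - a) * (d - b))
    = (a - c) * (a - d) * ((b - c) * (b - d)) by ring]

variable [IsStrictOrderedRing R]

lemma mul_neg_iff_xor {x y : R} (hx : x ≠ 0) (hy : y ≠ 0) :
    x * y < 0 ↔ Xor (x < 0) (y < 0) := by
  rcases hx.lt_or_gt with hx | hx <;> rcases hy.lt_or_gt with hy | hy <;>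
    simp [mul_neg_iff, Xor, hx, hy, hx.not_gt, hy.not_gt]

lemma separates_iff_xor {a b c d : R} (hca : c ≠ a) (hcb : c ≠ b) (hda : d ≠ a) (hdb : d ≠ b) :
    Separates a b c d ↔ Xor (Xor (c < a) (c < b)) (Xor (d < a) (d < b)) := by
  have := sub_ne_zero.2 hca; have := sub_ne_zero.2 hcb
  have := sub_ne_zero.2 hda; have := sub_ne_zero.2 hdb
  rw [Separates, mul_neg_iff_xor (by positivity) (by positivity), mul_neg_iff_xor ‹c - a ≠ 0› ‹_›,
    mul_neg_iff_xor ‹d - a ≠ 0› ‹_›]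
  simp only [sub_neg]

lemma not_separates_self (a c d : R) : ¬ Separates a a c d := by
  rw [Separates, not_lt]
  nlinarith [mul_self_nonneg ((c - a) * (d - a))]

/-- The product of the two right-hand products is the left-hand one times
`((k - b) * (l - b)) ^ 2`. -/
lemma separates_iff_xor_separates {a b c k l : R} (hka : k ≠ a) (hkb : k ≠ b) (hkc : k ≠ c)
    (hla : l ≠ a) (hlb : l ≠ b) (hlc : l ≠ c) :
    Separates a c k l ↔ Xor (Separates a b k l) (Separates b c k l) := by
  have := sub_ne_zero.2 hka; have := sub_ne_zero.2 hkb; have := sub_ne_zero.2 hkc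
  have := sub_ne_zero.2 hla; have := sub_ne_zero.2 hlb; have := sub_ne_zero.2 hlc
  have hsq : 0 < ((k - b) * (l - b)) ^ 2 := by positivity
  rw [Separates, Separates, Separates, ← mul_neg_iff_xor (by positivity) (by positivity),
    show (k - a) * (k - b) * ((l - a) * (l - b)) * ((k - b) * (k - c) * ((l - b) * (l - c)))
      = (k - a) * (k - c) * ((l - a) * (l - c)) * ((k - b) * (l - b)) ^ 2 by ring]
  simp [mul_neg_iff, hsq, hsq.not_gt]

/-- With `α = (a - b) * (c - d)` and `β = (a - d) * (b - c)` the three products are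
`β (α + β)`, `-α β` and `α (α + β)`, so exactly one of them is negative. -/
lemma separates_iff_not_separates {a b c d : R} (hab : a ≠ b) (hac : a ≠ c) (had : a ≠ d)
    (hbc : b ≠ c) (hbd : b ≠ d) (hcd : c ≠ d) :
    Separates a b c d ↔ ¬ Separates a c b d ∧ ¬ Separates a d c b := by
  have hα : (a - b) * (c - d) ≠ 0 := mul_ne_zero (sub_ne_zero.2 hab) (sub_ne_zero.2 hcd)
  have hβ : (a - d) * (b - c) ≠ 0 := mul_ne_zero (sub_ne_zero.2 had) (sub_ne_zero.2 hbc)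
  have hγ : (a - b) * (c - d) + (a - d) * (b - c) ≠ 0 := by
    rw [show (a - b) * (c - d) + (a - d) * (b - c) = (a - c) * (b - d) by ring]
    exact mul_ne_zero (sub_ne_zero.2 hac) (sub_ne_zero.2 hbd)
  rw [Separates, Separates, Separates,
    show (c - a) * (c - b) * ((d - a) * (d - b))
      = (a - d) * (b - c) * ((a - b) * (c - d) + (a - d) * (b - c)) by ring,
    show (b - a) * (b - c) * ((d - a) * (d - c))
      = -((a - b) * (c - d)) * ((a - d) * (b - c)) by ring,
    show (c - a) * (c - d) * ((b - a) * (b - d))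
      = (a - b) * (c - d) * ((a - b) * (c - d) + (a - d) * (b - c)) by ring]
  generalize (a - b) * (c - d) = α at hα hγ ⊢
  generalize (a - d) * (b - c) = β at hβ hγ ⊢
  rw [mul_neg_iff_xor hβ hγ, mul_neg_iff_xor (neg_ne_zero.2 hα) hβ, mul_neg_iff_xor hα hγ,
    neg_lt_zero]
  rcases hα.lt_or_gt with h1 | h1 <;> rcases hβ.lt_or_gt with h2 | h2 <;>
    rcases hγ.lt_or_gt with h3 | h3 <;>
    first | linarith | simp [Xor, h1, h2, h3, h1.not_gt, h2.not_gt, h3.not_gt]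

end Separation

section SameSep

variable {R : Type*} [CommRing R] [LinearOrder R] {ι : Type*} {z w : ι → R} {a b c d k l : ι}

def SameSep (z w : ι → R) (a b c d : ι) : Prop :=
  (Separates (z a) (z b) (z c) (z d) ↔ Separates (w a) (w b) (w c) (w d))

lemma sameSep_comm_left : SameSep z w a b c d ↔ SameSep z w b a c d := by
  simp only [SameSep, separates_comm_left (z a), separates_comm_left (w a)]

lemma sameSep_comm_right : SameSep z w a b c d ↔ SameSep z w a b d c := by
  simp only [SameSep, separates_comm_right (z a), separates_comm_right (w a)]

lemma sameSep_comm : SameSep z w a b c d ↔ SameSep z w c d a b := by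
  simp only [SameSep, separates_comm (z a), separates_comm (w a)]

variable [IsStrictOrderedRing R]

lemma sameSep_self : SameSep z w a a c d :=
  iff_of_false (not_separates_self _ _ _) (not_separates_self _ _ _)

lemma SameSep.trans (hz : Function.Injective z) (hw : Function.Injective w) {e : ι}
    (hka : k ≠ a) (hkb : k ≠ b) (hke : k ≠ e) (hla : l ≠ a) (hlb : l ≠ b) (hle : l ≠ e)
    (h₁ : SameSep z w a b k l) (h₂ : SameSep z w b e k l) : SameSep z w a e k l := by
  rw [SameSep] at h₁ h₂ ⊢
  rw [separates_iff_xor_separates (hz.ne hka) (hz.ne hkb) (hz.ne hke) (hz.ne hla) (hz.ne hlb)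
      (hz.ne hle),
    separates_iff_xor_separates (hw.ne hka) (hw.ne hkb) (hw.ne hke) (hw.ne hla) (hw.ne hlb)
      (hw.ne hle), h₁, h₂]

lemma SameSep.of_pairings (hz : Function.Injective z) (hw : Function.Injective w) (hab : a ≠ b)
    (hac : a ≠ c) (had : a ≠ d) (hbc : b ≠ c) (hbd : b ≠ d) (hcd : c ≠ d)
    (h₁ : SameSep z w a c b d) (h₂ : SameSep z w a d c b) : SameSep z w a b c d := by
  rw [SameSep] at h₁ h₂ ⊢
  rw [separates_iff_not_separates (hz.ne hab) (hz.ne hac) (hz.ne had) (hz.ne hbc) (hz.ne hbd)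
      (hz.ne hcd),
    separates_iff_not_separates (hw.ne hab) (hw.ne hac) (hw.ne had) (hw.ne hbc) (hw.ne hbd)
      (hw.ne hcd), h₁, h₂]

end SameSep

section CyclicOrder

variable {n : ℕ}

lemma val_add_natCast_sub (a : ZMod n) {v : ℕ} (hv : v < n) : (a + v - a).val = v := by
  rw [add_sub_cancel_left, ZMod.val_cast_of_lt hv]

lemma val_add_one_sub [Fact (1 < n)] (a : ZMod n) : (a + 1 - a).val = 1 := by
  rw [add_sub_cancel_left, ZMod.val_one]

lemma val_sub_one_sub [Fact (1 < n)] (a : ZMod n) : (a - 1 - a).val = n - 1 := by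
  rw [sub_sub_cancel_left, ZMod.neg_val, if_neg one_ne_zero, ZMod.val_one]

variable [NeZero n]

lemma val_sub_add_val (x a : ZMod n) :
    (x - a).val + a.val = x.val ∨ (x - a).val + a.val = x.val + n := by
  rcases le_or_gt a.val x.val with h | h
  · exact Or.inl (by rw [ZMod.val_sub h]; omega)
  · have hax : a - x ≠ 0 := sub_ne_zero.2 fun hax => by rw [hax] at h; exact h.false
    rw [show x - a = -(a - x) by ring, ZMod.neg_val, if_neg hax, ZMod.val_sub h.le]
    have := ZMod.val_lt a
    exact Or.inr (by omega)

lemma val_sub_inj {x y a : ZMod n} : (x - a).val = (y - a).val ↔ x = y :=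
  (ZMod.val_injective n).eq_iff.trans sub_left_inj

lemma add_val_sub (a x : ZMod n) : a + ((x - a).val : ZMod n) = x := by
  rw [ZMod.natCast_zmod_val, add_sub_cancel]

lemma mk_mem_chords_iff {i j : ZMod n} :
    s(i, j) ∈ chords n ↔ j ≠ i - 1 ∧ j ≠ i ∧ j ≠ i + 1 := by
  refine ⟨fun h => (Finset.mem_filter.1 h).2 i j rfl,
    fun h => Finset.mem_filter.2 ⟨Finset.mem_univ _, fun i' j' he => ?_⟩⟩
  rcases Sym2.eq_iff.1 he with ⟨rfl, rfl⟩ | ⟨rfl, rfl⟩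
  · exact h
  · obtain ⟨h₁, h₂, h₃⟩ := h
    exact ⟨fun h => h₃ (by rw [h]; ring), Ne.symm h₂, fun h => h₁ (by rw [h]; ring)⟩

lemma ne_of_mk_mem_chords {i j : ZMod n} (h : s(i, j) ∈ chords n) :
    j ≠ i ∧ j ≠ i + 1 ∧ j + 1 ≠ i ∧ j + 1 ≠ i + 1 := by
  obtain ⟨h₁, h₂, h₃⟩ := mk_mem_chords_iff.1 h
  exact ⟨h₂, h₃, fun h => h₁ (by rw [← h]; ring), fun h => h₂ (add_right_cancel h)⟩

lemma cycBtw_iff_xor {p q r : ZMod n} (hpq : p ≠ q) (hrp : r ≠ p) (hrq : r ≠ q) :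
    CycBtw p r q ↔ Xor (q.val < p.val) (Xor (r.val < p.val) (r.val < q.val)) := by
  have := (ZMod.val_injective n).ne hpq
  have := (ZMod.val_injective n).ne hrp
  have := (ZMod.val_injective n).ne hrq
  have := ZMod.val_lt p; have := ZMod.val_lt q; have := ZMod.val_lt r
  have := ZMod.val_lt (r - p); have := ZMod.val_lt (q - p)
  unfold CycBtw
  simp only [Xor]
  rcases val_sub_add_val r p with h | h <;> rcases val_sub_add_val q p with h' | h' <;> omega

lemma cycBtw_neg {p q r : ZMod n} (hpq : p ≠ q) (hrp : r ≠ p) (hrq : r ≠ q) :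
    CycBtw (-p) (-r) (-q) ↔ CycBtw q r p := by
  have := (ZMod.val_injective n).ne hpq
  have := (ZMod.val_injective n).ne hrp
  have := (ZMod.val_injective n).ne hrq
  have := ZMod.val_lt p; have := ZMod.val_lt q; have := ZMod.val_lt r
  have := ZMod.val_lt (p - r); have := ZMod.val_lt (p - q); have := ZMod.val_lt (r - q)
  unfold CycBtw
  rw [neg_sub_neg, neg_sub_neg]
  rcases val_sub_add_val p r with h | h <;> rcases val_sub_add_val p q with h' | h' <;>
    rcases val_sub_add_val r q with h'' | h'' <;> omega

variable {R : Type*} [CommRing R] [LinearOrder R] [IsStrictOrderedRing R]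

lemma separates_val_iff {p q r s : ZMod n} (hpq : p ≠ q) (hrp : r ≠ p) (hrq : r ≠ q)
    (hsp : s ≠ p) (hsq : s ≠ q) :
    Separates (p.val : R) q.val r.val s.val ↔ Xor (CycBtw p r q) (CycBtw p s q) := by
  have hcast : ∀ {x y : ZMod n}, x ≠ y → (x.val : R) ≠ y.val := fun h =>
    Nat.cast_injective.ne ((ZMod.val_injective n).ne h)
  rw [separates_iff_xor (hcast hrp) (hcast hrq) (hcast hsp) (hcast hsq), cycBtw_iff_xor hpq hrp hrq,
    cycBtw_iff_xor hpq hsp hsq]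
  simp only [Nat.cast_lt]
  by_cases hc : q.val < p.val <;> simp only [hc, xor_true, xor_false, id, xor_not_not]

lemma separates_val_add_left (c : ZMod n) {p q r s : ZMod n} (hpq : p ≠ q) (hrp : r ≠ p)
    (hrq : r ≠ q) (hsp : s ≠ p) (hsq : s ≠ q) :
    Separates ((c + p).val : R) (c + q).val (c + r).val (c + s).val ↔
      Separates (p.val : R) q.val r.val s.val := by
  have hc : ∀ {x y : ZMod n}, x ≠ y → c + x ≠ c + y := fun h => (add_right_injective c).ne h
  rw [separates_val_iff (hc hpq) (hc hrp) (hc hrq) (hc hsp) (hc hsq),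
    separates_val_iff hpq hrp hrq hsp hsq]
  simp only [CycBtw, add_sub_add_left_eq_sub]

lemma separates_val_neg {p q r s : ZMod n} (hpq : p ≠ q) (hrp : r ≠ p) (hrq : r ≠ q)
    (hsp : s ≠ p) (hsq : s ≠ q) :
    Separates ((-p).val : R) (-q).val (-r).val (-s).val ↔
      Separates (p.val : R) q.val r.val s.val := by
  have hneg : ∀ {x y : ZMod n}, x ≠ y → -x ≠ -y := fun h => neg_injective.ne h
  rw [separates_val_iff (hneg hpq) (hneg hrp) (hneg hrq) (hneg hsp) (hneg hsq),
    cycBtw_neg hpq hrp hrq, cycBtw_neg hpq hsp hsq, separates_comm_left,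
    separates_val_iff hpq.symm hrq hrp hsq hsp]

lemma adjacent_iff_forall_not_separates [Fact (1 < n)] {p q : ZMod n} (hpq : p ≠ q) :
    (q = p + 1 ∨ p = q + 1) ↔ ∀ r s, r ≠ p → r ≠ q → s ≠ p → s ≠ q → r ≠ s →
      ¬ Separates (p.val : R) q.val r.val s.val := by
  have hp1 := val_add_one_sub p
  have hpm1 := val_sub_one_sub p
  have hoff : ∀ {x y : ZMod n}, x ≠ y → (x - p).val ≠ (y - p).val := fun h => val_sub_inj.not.2 h
  have hne : ∀ {x y : ZMod n}, (x - p).val ≠ (y - p).val → x ≠ y := fun h he => h (by rw [he])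
  have hlt : ∀ x : ZMod n, (x - p).val < n := fun x => ZMod.val_lt _
  have hpp : (p - p).val = 0 := by rw [sub_self, ZMod.val_zero]
  set d := (q - p).val with hd
  have hd0 : d ≠ 0 := hpp ▸ hoff hpq.symm
  have hadj : (q = p + 1 ∨ p = q + 1) ↔ d = 1 ∨ d = n - 1 := by
    refine or_congr ⟨fun h => by rw [hd, h, hp1], fun h => val_sub_inj.1 (h.trans hp1.symm)⟩
      ⟨fun h => by rw [hd, show q = p - 1 by rw [h]; ring, hpm1], fun h => ?_⟩
    rw [val_sub_inj.1 (h.trans hpm1.symm)]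
    ring
  rw [hadj]
  constructor
  · intro hd' r s hrp hrq hsp hsq _
    have := hoff hrp; have := hoff hrq; have := hoff hsp; have := hoff hsq
    have := hlt r; have := hlt s
    rw [separates_val_iff hpq hrp hrq hsp hsq]
    simp only [CycBtw, Xor, ← hd] at *
    omega
  · intro h
    by_contra hd'
    have := hlt q
    have hs : (p + (d + 1 : ℕ) - p).val = d + 1 := val_add_natCast_sub p (by omega)
    have h1 : p + 1 ≠ p := hne (by omega)
    have h2 : p + 1 ≠ q := hne (by omega)
    have h3 : p + (d + 1 : ℕ) ≠ p := hne (by omega)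
    have h4 : p + (d + 1 : ℕ) ≠ q := hne (by omega)
    have h5 : p + 1 ≠ p + (d + 1 : ℕ) := hne (by omega)
    apply h _ _ h1 h2 h3 h4 h5
    rw [separates_val_iff hpq h1 h2 h3 h4]
    simp only [CycBtw, Xor, hp1, hs, ← hd]
    omega

end CyclicOrder

section Reconstruction

variable {n : ℕ} {R : Type*} [CommRing R] [LinearOrder R] [IsStrictOrderedRing R]
  {z w : ZMod n → R}

lemma sameSep_walk (hz : Function.Injective z) (hw : Function.Injective w) {a k l : ZMod n}
    {v₁ v₂ : ℕ} (hv : v₁ ≤ v₂) (havoid : ∀ v, v₁ ≤ v → v ≤ v₂ → a + v ≠ k ∧ a + v ≠ l)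
    (hstep : ∀ v, v₁ ≤ v → v < v₂ → SameSep z w (a + v) (a + v + 1) k l) :
    SameSep z w (a + v₁) (a + v₂) k l := by
  obtain ⟨d, rfl⟩ := Nat.exists_eq_add_of_le hv
  induction d with
  | zero => exact sameSep_self
  | succ d ih =>
    have h₁ := havoid v₁ le_rfl (by omega)
    have h₂ := havoid (v₁ + d) (by omega) (by omega)
    have h₃ := havoid (v₁ + (d + 1)) (by omega) le_rfl
    rw [← add_assoc, Nat.cast_succ, ← add_assoc] at h₃ ⊢
    exact (ih (by omega) (fun v h h' => havoid v h (by omega))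
      (fun v h h' => hstep v h (by omega))).trans hz hw h₁.1.symm h₂.1.symm h₃.1.symm
        h₁.2.symm h₂.2.symm h₃.2.symm (hstep (v₁ + d) (by omega) (by omega))

variable [NeZero n]

lemma val_sub_add_val_sub (x y a : ZMod n) :
    (x - y).val + (y - a).val = (x - a).val ∨ (x - y).val + (y - a).val = (x - a).val + n := by
  simpa only [sub_sub_sub_cancel_right] using val_sub_add_val (x - a) (y - a)

def SameEdgeCrossings (z w : ZMod n → R) : Prop :=
  ∀ i j, s(i, j) ∈ chords n → SameSep z w i (i + 1) j (j + 1)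

variable [Fact (1 < n)]

lemma sameSep_edge (hedge : SameEdgeCrossings z w) (hz : Function.Injective z)
    (hw : Function.Injective w) {i k l : ZMod n}
    (hkl : k ≠ l) (hki : k ≠ i) (hki' : k ≠ i + 1) (hli : l ≠ i) (hli' : l ≠ i + 1) :
    SameSep z w i (i + 1) k l := by
  have hoff : ∀ {x y : ZMod n}, x ≠ y → (x - i).val ≠ (y - i).val := fun h => val_sub_inj.not.2 h
  have hne : ∀ {x y : ZMod n}, (x - i).val ≠ (y - i).val → x ≠ y := fun h he => h (by rw [he])
  wlog hlt : (k - i).val < (l - i).val generalizing k l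
  · exact sameSep_comm_right.2
      (this hkl.symm hli hli' hki hki' ((hoff hkl).symm.lt_of_le (not_lt.1 hlt)))
  have hi := val_add_one_sub i
  have hi' := val_sub_one_sub i
  have hii : (i - i).val = 0 := by rw [sub_self, ZMod.val_zero]
  have := hoff hki; have := hoff hki'
  have := ZMod.val_lt (l - i)
  rw [← add_val_sub i k, ← add_val_sub i l, sameSep_comm]
  refine sameSep_walk hz hw hlt.le (fun v h₁ h₂ => ?_) (fun v h₁ h₂ => ?_)
  · have := val_add_natCast_sub i (v := v) (by omega)
    exact ⟨hne (by omega), hne (by omega)⟩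
  · have := val_add_natCast_sub i (v := v) (by omega)
    refine sameSep_comm.1 (hedge i _ (mk_mem_chords_iff.2 ⟨hne ?_, hne ?_, hne ?_⟩)) <;> omega

lemma sameSep_of_val_sub_lt (hedge : SameEdgeCrossings z w) (hz : Function.Injective z)
    (hw : Function.Injective w)
    {a b k l : ZMod n} (hkl : k ≠ l) (hk : (b - a).val < (k - a).val)
    (hl : (b - a).val < (l - a).val) : SameSep z w a b k l := by
  have hne : ∀ {x y : ZMod n}, (x - a).val ≠ (y - a).val → x ≠ y := fun h he => h (by rw [he])
  have := ZMod.val_lt (k - a)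
  have := ZMod.val_lt (l - a)
  have hwalk := sameSep_walk hz hw (a := a) (k := k) (l := l) (Nat.zero_le (b - a).val)
    (fun v _ h => ?_) (fun v _ h => ?_)
  · rwa [Nat.cast_zero, add_zero, add_val_sub] at hwalk
  · have := val_add_natCast_sub a (v := v) (by omega)
    exact ⟨hne (by omega), hne (by omega)⟩
  · have := val_add_natCast_sub a (v := v) (by omega)
    have h' := val_add_natCast_sub a (v := v + 1) (by omega)
    rw [Nat.cast_succ, ← add_assoc] at h'
    exact sameSep_edge hedge hz hw hkl (hne (by omega)) (hne (by omega)) (hne (by omega))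
      (hne (by omega))

lemma sameSep_of_ne (hedge : SameEdgeCrossings z w) (hz : Function.Injective z)
    (hw : Function.Injective w) {a b k l : ZMod n}
    (hab : a ≠ b) (hak : a ≠ k) (hal : a ≠ l) (hbk : b ≠ k) (hbl : b ≠ l) (hkl : k ≠ l) :
    SameSep z w a b k l := by
  have hoff : ∀ {x y : ZMod n}, x ≠ y → (x - a).val ≠ (y - a).val := fun h => val_sub_inj.not.2 h
  wlog hlt : (k - a).val < (l - a).val generalizing k l
  · exact sameSep_comm_right.2 (this hal hak hbl hbk hkl.symm
      ((hoff hkl).symm.lt_of_le (not_lt.1 hlt)))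
  have haa : (a - a).val = 0 := by rw [sub_self, ZMod.val_zero]
  have := hoff hak.symm; have := hoff hal.symm; have := hoff hab.symm
  have := hoff hbk; have := hoff hbl
  have := ZMod.val_lt (b - a); have := ZMod.val_lt (l - a)
  rcases (hoff hbk).lt_or_gt with hb | hb
  · exact sameSep_of_val_sub_lt hedge hz hw hkl hb (hb.trans hlt)
  rcases (hoff hbl).lt_or_gt with hb' | hb'
  · -- `{a, b}` and `{k, l}` interleave in the label order
    refine SameSep.of_pairings hz hw hab hak hal hbk hbl hkl
      (sameSep_of_val_sub_lt hedge hz hw hbl hb hlt) (sameSep_comm_left.2 ?_)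
    have h₁ := val_sub_add_val_sub a l a
    have h₂ := val_sub_add_val_sub k l a
    have h₃ := val_sub_add_val_sub b l a
    refine sameSep_of_val_sub_lt hedge hz hw hbk.symm ?_ ?_ <;> omega
  · refine sameSep_comm_left.2 (sameSep_of_val_sub_lt hedge hz hw hkl ?_ ?_) <;>
    · have h₁ := val_sub_add_val_sub a b a
      have h₂ := val_sub_add_val_sub k b a
      have h₃ := val_sub_add_val_sub l b a
      have := ZMod.val_lt (k - b); have := ZMod.val_lt (l - b)
      omega

end Reconstruction

section SignPattern

variable {n : ℕ}

lemma u_mk_neg_iff {K : Type*} [Field K] [LinearOrder K] [IsStrictOrderedRing K]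
    (z : ZMod n → K) (i j : ZMod n) :
    u z s(i, j) < 0 ↔ Separates (z i) (z (i + 1)) (z j) (z (j + 1)) := by
  rw [u, Sym2.lift_mk]
  dsimp only
  rw [div_neg_iff, ← mul_neg_iff, Separates,
    show (z i - z (j + 1)) * (z (i + 1) - z j) * ((z i - z j) * (z (i + 1) - z (j + 1)))
      = (z j - z i) * (z j - z (i + 1)) * ((z (j + 1) - z i) * (z (j + 1) - z (i + 1))) by ring]

variable [NeZero n]

lemma u_ne_zero {z : ZMod n → ℝ} (hz : Function.Injective z) {e : Sym2 (ZMod n)}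
    (he : e ∈ chords n) : u z e ≠ 0 := by
  induction e using Sym2.ind with
  | h i j =>
    obtain ⟨h₁, h₂, h₃, h₄⟩ := ne_of_mk_mem_chords he
    have hsub : ∀ {x y : ZMod n}, y ≠ x → z x - z y ≠ 0 := fun h => sub_ne_zero.2 (hz.ne h.symm)
    rw [u, Sym2.lift_mk]
    exact div_ne_zero (mul_ne_zero (hsub h₃) (hsub h₂)) (mul_ne_zero (hsub h₁) (hsub h₄))

noncomputable def signPattern (z : ZMod n → ℝ) (e : Sym2 (ZMod n)) : ℤ :=
  if e ∈ chords n ∧ u z e < 0 then -1 else 1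

lemma signPattern_eq_iff {z w : ZMod n → ℝ} :
    signPattern z = signPattern w ↔ SameEdgeCrossings z w := by
  simp only [SameEdgeCrossings, SameSep, ← u_mk_neg_iff]
  constructor
  · intro h i j hc
    have := congrFun h s(i, j)
    by_cases hz : u z s(i, j) < 0 <;> by_cases hw : u w s(i, j) < 0 <;>
      simp [signPattern, hc, hz, hw] at this ⊢
  · intro h
    funext e
    induction e using Sym2.ind with
    | h i j =>
      by_cases hc : s(i, j) ∈ chords n
      · simp only [signPattern, hc, true_and, h i j hc]
      · simp only [signPattern, hc, false_and, if_false]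

lemma eq_signPattern_iff {z : ZMod n → ℝ} (hz : Function.Injective z) {s : Sym2 (ZMod n) → ℤ} :
    s = signPattern z ↔ (∀ e ∈ chords n, s e = 1 ∨ s e = -1) ∧ (∀ e ∉ chords n, s e = 1) ∧
      ∀ e ∈ chords n, Real.sign (u z e) = s e := by
  have hsign : ∀ e ∈ chords n, Real.sign (u z e) = signPattern z e := fun e he => by
    rcases (u_ne_zero hz he).lt_or_gt with h | h
    · simp [signPattern, he, h, Real.sign_of_neg h]
    · simp [signPattern, he, h.not_gt, Real.sign_of_pos h]
  constructor
  · rintro rfl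
    refine ⟨fun e _ => ?_, fun e he => by simp [signPattern, he], hsign⟩
    unfold signPattern
    split_ifs <;> simp
  · rintro ⟨-, hoff, hon⟩
    funext e
    by_cases he : e ∈ chords n
    · exact_mod_cast (hon e he).symm.trans (hsign e he)
    · simp [signPattern, he, hoff e he]

lemma signPattern_eq_of_lt_iff {z w : ZMod n → ℝ} (hz : Function.Injective z)
    (hw : Function.Injective w) (h : ∀ a b, z a < z b ↔ w a < w b) :
    signPattern z = signPattern w := by
  refine signPattern_eq_iff.2 fun i j hc => ?_
  obtain ⟨h₁, h₂, h₃, h₄⟩ := ne_of_mk_mem_chords hc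
  rw [SameSep, separates_iff_xor (hz.ne h₁) (hz.ne h₂) (hz.ne h₃) (hz.ne h₄),
    separates_iff_xor (hw.ne h₁) (hw.ne h₂) (hw.ne h₃) (hw.ne h₄), h, h, h, h]

def posConfig (σ : Equiv.Perm (ZMod n)) (x : ZMod n) : ℝ := (σ x).val

lemma posConfig_injective (σ : Equiv.Perm (ZMod n)) : Function.Injective (posConfig σ) :=
  fun _ _ h => σ.injective (ZMod.val_injective n (Nat.cast_injective h))

lemma exists_perm_val_lt_iff {α : Type*} [LinearOrder α] {z : ZMod n → α}
    (hz : Function.Injective z) :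
    ∃ σ : Equiv.Perm (ZMod n), ∀ a b, (σ a).val < (σ b).val ↔ z a < z b := by
  classical
  let rank (a : ZMod n) : ℕ := (Finset.univ.filter fun b => z b < z a).card
  have hrank_lt (a : ZMod n) : rank a < n := by
    rw [← ZMod.card n, ← Finset.card_univ]
    exact Finset.card_lt_card (Finset.filter_ssubset.2 ⟨a, Finset.mem_univ _, lt_irrefl _⟩)
  have hrank_mono {a b : ZMod n} (h : z a < z b) : rank a < rank b := by
    refine Finset.card_lt_card ⟨fun c hc => ?_, fun hsub => ?_⟩
    · simp only [Finset.mem_filter, Finset.mem_univ, true_and] at hc ⊢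
      exact hc.trans h
    · simpa using @hsub a (by simpa using h)
  have hrank (a b : ZMod n) : rank a < rank b ↔ z a < z b := by
    refine ⟨fun h => ?_, hrank_mono⟩
    rcases lt_trichotomy (z a) (z b) with h' | h' | h'
    · exact h'
    · exact absurd h (by rw [hz h']; exact lt_irrefl _)
    · exact absurd (hrank_mono h') h.asymm
  have hval (a : ZMod n) : ((rank a : ZMod n)).val = rank a := ZMod.val_cast_of_lt (hrank_lt a)
  have hinj : Function.Injective fun a => (rank a : ZMod n) := fun a b h => by
    have h' : rank a = rank b := by rw [← hval a, ← hval b]; exact congrArg ZMod.val h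
    rcases lt_trichotomy (z a) (z b) with h'' | h'' | h''
    · exact absurd h' (hrank_mono h'').ne
    · exact hz h''
    · exact absurd h' (hrank_mono h'').ne'
  refine ⟨Equiv.ofBijective _ (Finite.injective_iff_bijective.1 hinj), fun a b => ?_⟩
  simp only [Equiv.ofBijective_apply, hval, hrank]

lemma setOf_realizable_eq_range :
    {s : Sym2 (ZMod n) → ℤ | (∀ e ∈ chords n, s e = 1 ∨ s e = -1) ∧ (∀ e ∉ chords n, s e = 1) ∧
      Realizable n s} = Set.range fun σ => signPattern (posConfig σ) := by
  ext s
  constructor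
  · rintro ⟨hpm, hoff, z, hz, hon⟩
    obtain ⟨σ, hσ⟩ := exists_perm_val_lt_iff hz
    refine ⟨σ, (signPattern_eq_of_lt_iff hz (posConfig_injective σ) fun a b => ?_).symm.trans
      ((eq_signPattern_iff hz).2 ⟨hpm, hoff, hon⟩).symm⟩
    rw [posConfig, posConfig, Nat.cast_lt, hσ]
  · rintro ⟨σ, rfl⟩
    obtain ⟨hpm, hoff, hon⟩ := (eq_signPattern_iff (posConfig_injective σ)).1 rfl
    exact ⟨hpm, hoff, posConfig σ, posConfig_injective σ, hon⟩

end SignPattern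

section Dihedral

variable {n : ℕ}

lemma ZMod.two_ne_zero_of_lt (hn : 2 < n) : (2 : ZMod n) ≠ 0 := by
  intro h
  have := congrArg ZMod.val h
  rw [ZMod.val_zero, ← Nat.cast_ofNat, ZMod.val_cast_of_lt hn] at this
  exact two_ne_zero this

/-- The rotation `x ↦ c + x` (for `true`) or the reflection `x ↦ c - x` (for `false`). -/
def dihedralPerm (c : ZMod n) : Bool → Equiv.Perm (ZMod n)
  | true => Equiv.addLeft c
  | false => Equiv.subLeft c

lemma dihedralPerm_injective (h₂ : (2 : ZMod n) ≠ 0) :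
    Function.Injective fun cb : ZMod n × Bool => dihedralPerm cb.1 cb.2 := by
  rintro ⟨c, b⟩ ⟨c', b'⟩ h
  have h₀ := Equiv.congr_fun h 0
  have h₁ := Equiv.congr_fun h 1
  cases b <;> cases b' <;> simp only [dihedralPerm, Equiv.coe_addLeft, Equiv.subLeft_apply,
    add_zero, sub_zero] at h₀ h₁ <;> subst h₀
  · rfl
  · exact absurd (by linear_combination -h₁) h₂
  · exact absurd (by linear_combination h₁) h₂
  · rfl

variable [NeZero n]

lemma ZMod.induction_add_one {P : ZMod n → Prop} (h₀ : P 0) (hs : ∀ x, P x → P (x + 1))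
    (x : ZMod n) : P x := by
  rw [← ZMod.natCast_zmod_val x]
  induction x.val with
  | zero => simpa using h₀
  | succ k ih => rw [Nat.cast_succ]; exact hs _ ih

lemma exists_eq_add_or_eq_sub_of_adjacent (h₂ : (2 : ZMod n) ≠ 0) {π : ZMod n → ZMod n}
    (hπ : Function.Injective π) (hadj : ∀ p, π (p + 1) = π p + 1 ∨ π p = π (p + 1) + 1) :
    ∃ c, (∀ p, π p = c + p) ∨ (∀ p, π p = c - p) := by
  have hstep : ∀ p, π (p + 1) - π p = π 1 - π 0 := ZMod.induction_add_one (by simp) fun p hp => by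
    have hback : π (p + 1 + 1) ≠ π p := fun h => h₂ (by linear_combination hπ h)
    rcases hadj p with h | h <;> rcases hadj (p + 1) with h' | h'
    · linear_combination h' - h + hp
    · exact absurd (by linear_combination h - h') hback
    · exact absurd (by linear_combination h' - h) hback
    · linear_combination h - h' + hp
  have hlin : ∀ p, π p = π 0 + (π 1 - π 0) * p := ZMod.induction_add_one (by simp) fun p hp => by
    linear_combination hstep p + hp
  refine ⟨π 0, (hadj 0).imp (fun h p => ?_) (fun h p => ?_)⟩ <;> rw [zero_add] at h <;> rw [hlin p]
  · linear_combination p * h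
  · linear_combination (-p) * h

variable [Fact (1 < n)]

lemma exists_eq_add_or_eq_sub_of_sameEdgeCrossings (h₂ : (2 : ZMod n) ≠ 0)
    {σ τ : Equiv.Perm (ZMod n)} (h : SameEdgeCrossings (posConfig σ) (posConfig τ)) :
    ∃ c, (∀ x, τ x = c + σ x) ∨ (∀ x, τ x = c - σ x) := by
  have hne : ∀ {u v : ZMod n}, τ u ≠ τ v → u ≠ v := fun h he => h (congrArg τ he)
  have hadj : ∀ x y, x ≠ y → σ y = σ x + 1 → τ y = τ x + 1 ∨ τ x = τ y + 1 := by
    intro x y hxy hσ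
    refine (adjacent_iff_forall_not_separates (R := ℝ) (τ.injective.ne hxy)).2
      fun r s hrx hry hsx hsy hrs => ?_
    obtain ⟨a, rfl⟩ := τ.surjective r
    obtain ⟨b, rfl⟩ := τ.surjective s
    exact (sameSep_of_ne h (posConfig_injective σ) (posConfig_injective τ) hxy (hne hrx).symm
      (hne hsx).symm (hne hry).symm (hne hsy).symm (hne hrs)).not.1
      ((adjacent_iff_forall_not_separates (σ.injective.ne hxy)).1 (Or.inl hσ) _ _
        (σ.injective.ne (hne hrx)) (σ.injective.ne (hne hry)) (σ.injective.ne (hne hsx))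
        (σ.injective.ne (hne hsy)) (σ.injective.ne (hne hrs)))
  obtain ⟨c, hc⟩ := exists_eq_add_or_eq_sub_of_adjacent h₂ (τ.injective.comp σ.symm.injective)
    fun p => hadj (σ.symm p) (σ.symm (p + 1)) (by simp) (by simp)
  exact ⟨c, hc.imp (fun h x => by simpa using h (σ x)) (fun h x => by simpa using h (σ x))⟩

lemma signPattern_dihedralPerm_mul (c : ZMod n) (b : Bool) (σ : Equiv.Perm (ZMod n)) :
    signPattern (posConfig (dihedralPerm c b * σ)) = signPattern (posConfig σ) := by
  refine signPattern_eq_iff.2 fun i j hc => ?_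
  obtain ⟨h₁, h₂, h₃, h₄⟩ := ne_of_mk_mem_chords hc
  have hi : σ i ≠ σ (i + 1) := σ.injective.ne fun h => one_ne_zero (by linear_combination -h)
  have hσ : ∀ {x y : ZMod n}, x ≠ y → σ x ≠ σ y := fun h => σ.injective.ne h
  cases b
  · simp only [SameSep, posConfig, Equiv.Perm.mul_apply, dihedralPerm, Equiv.subLeft_apply,
      sub_eq_add_neg]
    rw [separates_val_add_left c (neg_injective.ne hi) (neg_injective.ne (hσ h₁))
      (neg_injective.ne (hσ h₂)) (neg_injective.ne (hσ h₃)) (neg_injective.ne (hσ h₄)),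
      separates_val_neg hi (hσ h₁) (hσ h₂) (hσ h₃) (hσ h₄)]
  · simp only [SameSep, posConfig, Equiv.Perm.mul_apply, dihedralPerm, Equiv.coe_addLeft]
    rw [separates_val_add_left c hi (hσ h₁) (hσ h₂) (hσ h₃) (hσ h₄)]

lemma signPattern_posConfig_eq_iff (h₂ : (2 : ZMod n) ≠ 0) {σ τ : Equiv.Perm (ZMod n)} :
    signPattern (posConfig τ) = signPattern (posConfig σ) ↔
      ∃ cb : ZMod n × Bool, dihedralPerm cb.1 cb.2 * σ = τ := by
  constructor
  · intro h
    obtain ⟨c, hc | hc⟩ :=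
      exists_eq_add_or_eq_sub_of_sameEdgeCrossings h₂ (signPattern_eq_iff.1 h.symm)
    · exact ⟨(c, true), Equiv.ext fun x => (hc x).symm⟩
    · exact ⟨(c, false), Equiv.ext fun x => (hc x).symm⟩
  · rintro ⟨⟨c, b⟩, rfl⟩
    exact signPattern_dihedralPerm_mul c b σ

/-- Each sign pattern is attained by exactly `2 n` orderings, one dihedral orbit. -/
lemma card_image_signPattern_mul (h₂ : (2 : ZMod n) ≠ 0) :
    (Finset.univ.image fun σ : Equiv.Perm (ZMod n) => signPattern (posConfig σ)).card * (2 * n)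
      = n.factorial := by
  classical
  have hperm : Fintype.card (Equiv.Perm (ZMod n)) = n.factorial := by
    rw [Fintype.card_perm, ZMod.card]
  rw [← hperm, ← Finset.card_univ,
    Finset.card_eq_sum_card_image (fun σ => signPattern (posConfig σ)), Finset.sum_const_nat]
  rintro _ hs
  obtain ⟨σ, -, rfl⟩ := Finset.mem_image.1 hs
  have hfib : Finset.univ.filter (fun τ => signPattern (posConfig τ) = signPattern (posConfig σ))
      = Finset.univ.image fun cb : ZMod n × Bool => dihedralPerm cb.1 cb.2 * σ := by
    ext τ
    simp [signPattern_posConfig_eq_iff h₂]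
  rw [hfib, Finset.card_image_of_injective _ fun _ _ h =>
      dihedralPerm_injective h₂ (mul_left_injective σ h),
    Finset.card_univ, Fintype.card_prod, ZMod.card, Fintype.card_bool, mul_comm]

end Dihedral

/-- For `n ≥ 4`, the number of realizable sign patterns is `(n-1)!/2`. -/
theorem card_realizable_sign_patterns (n : ℕ) [NeZero n] (hn : 4 ≤ n) :
    2 * Set.ncard {s : Sym2 (ZMod n) → ℤ |
      (∀ e ∈ chords n, s e = 1 ∨ s e = -1) ∧ (∀ e ∉ chords n, s e = 1) ∧
      Realizable n s} = Nat.factorial (n - 1) := by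
  have : Fact (1 < n) := ⟨by omega⟩
  have hcard := card_image_signPattern_mul (ZMod.two_ne_zero_of_lt (n := n) (by omega))
  rw [setOf_realizable_eq_range, ← Set.image_univ, ← Finset.coe_univ, ← Finset.coe_image,
    Set.ncard_coe_finset]
  obtain ⟨m, rfl⟩ : ∃ m, n = m + 1 := ⟨n - 1, by omega⟩
  rw [Nat.factorial_succ] at hcard
  rw [add_tsub_cancel_right]
  exact Nat.eq_of_mul_eq_mul_left m.succ_pos (by linarith)

end M0n
end

section
/- Let n and ℓ be integers with 3 ≤ ℓ ≤ n−2, let z : ZMod n → ℝ be injective, and let τ ∈ Perm(ZMod n) be the transposition exchanging 1 and ℓ. Then the following identity holds: u_{{0,ℓ}}(z ∘ τ) = − u_{{0,ℓ}}(z) · ∏_{e ∈ E, e crosses {0,ℓ}} u_e(z)^{−1}, where the product is over all chords crossing {0, ℓ}. (This is the row v_{n1} ↦ −u_{nℓ} ∏_{kj ≁ nℓ} u_{kj}^{−1} of the monomial map φ_{(1ℓ)}.) -/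
namespace M0n

/-! The chords crossing `{0, ℓ}` are exactly the `{X, Y}` with `1 ≤ X < ℓ < Y < n`. With
`F i j = z i - z j`, the inverse `u_{XY}⁻¹` is the mixed second quotient
`F X Y · F (X+1) (Y+1) / (F X (Y+1) · F (X+1) Y)`, so the product over this rectangle of indices
telescopes in both variables to a cross-ratio of `z 1, z ℓ, z (ℓ+1), z n = z 0`. The transposition
`(1 ℓ)` turns `u_{0ℓ}` into another cross-ratio of the same four points, and the claim reduces to an
identity between cross-ratios of four distinct points. -/

open Finset

section Telescoping

variable {K : Type*} [Field K]

theorem prod_Ico_div_of_ne_zero (f : ℕ → K) {m n : ℕ} (hmn : m ≤ n)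
    (hf : ∀ i ∈ Icc m n, f i ≠ 0) : ∏ i ∈ Ico m n, f (i + 1) / f i = f n / f m := by
  induction n, hmn using Nat.le_induction with
  | base => simp [div_self (hf m (by simp))]
  | succ n hmn ih =>
    rw [prod_Ico_succ_top hmn, ih fun i hi => hf i (by simp at hi ⊢; omega),
      div_mul_div_cancel₀' (hf n (by simp; omega))]

theorem prod_Ico_prod_Ico_div_of_ne_zero (F : ℕ → ℕ → K) {a b c d : ℕ} (hab : a ≤ b)
    (hcd : c ≤ d) (hF : ∀ i ∈ Icc a b, ∀ j ∈ Icc c d, F i j ≠ 0) :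
    ∏ i ∈ Ico a b, ∏ j ∈ Ico c d, F i j * F (i + 1) (j + 1) / (F i (j + 1) * F (i + 1) j)
      = F a c * F b d / (F a d * F b c) := by
  have inner : ∀ i ∈ Ico a b,
      ∏ j ∈ Ico c d, F i j * F (i + 1) (j + 1) / (F i (j + 1) * F (i + 1) j)
        = (F (i + 1) d / F (i + 1) c) / (F i d / F i c) := by
    intro i hi
    simp only [mem_Ico] at hi
    have hG := prod_Ico_div_of_ne_zero (fun j => F (i + 1) j / F i j) hcd fun j hj =>
      div_ne_zero (hF _ (by simp; omega) j hj) (hF _ (by simp; omega) j hj)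
    simp only [div_div_div_eq] at hG
    calc _ = ∏ j ∈ Ico c d, F (i + 1) (j + 1) * F i j / (F i (j + 1) * F (i + 1) j) :=
          prod_congr rfl fun j _ => by ring
      _ = _ := by rw [hG, div_div_div_eq]; ring
  rw [prod_congr rfl inner, prod_Ico_div_of_ne_zero (fun i => F i d / F i c) hab fun i hi =>
    div_ne_zero (hF i hi d (by simp; omega)) (hF i hi c (by simp; omega)), div_div_div_eq]
  ring

end Telescoping

variable {n : ℕ}

theorem u_mk {K : Type*} [Field K] (z : ZMod n → K) (i j : ZMod n) :
    u z s(i, j)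
      = ((z i - z (j + 1)) * (z (i + 1) - z j)) / ((z i - z j) * (z (i + 1) - z (j + 1))) :=
  rfl

theorem val_sub_eq_ite [NeZero n] (a b : ZMod n) :
    (a - b).val = if b.val ≤ a.val then a.val - b.val else a.val + n - b.val := by
  split_ifs with h
  · exact ZMod.val_sub h
  · have hba : b - a ≠ 0 := fun h0 => by
      have := congrArg ZMod.val h0
      rw [ZMod.val_sub (by omega), ZMod.val_zero] at this
      omega
    rw [← neg_sub, ZMod.neg_val, if_neg hba, ZMod.val_sub (by omega)]
    have := a.val_lt
    omega

theorem cycBtw_iff_val [NeZero n] {i x j : ZMod n} :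
    CycBtw i x j ↔ (i.val < x.val ∧ x.val < j.val) ∨
      (j.val < i.val ∧ (i.val < x.val ∨ x.val < j.val)) := by
  have := i.val_lt
  have := x.val_lt
  have := j.val_lt
  simp only [CycBtw, val_sub_eq_ite]
  split_ifs <;> omega

theorem isChord_of_crosses {p q : Sym2 (ZMod n)} (h : Crosses n p q) : IsChord n p := by
  intro i j hp
  induction q using Sym2.ind with | _ k l => ?_
  have long : ∀ {x y : ZMod n}, Crosses n s(x, y) s(k, l) → 1 < (y - x).val := fun h' => by
    rcases h' _ _ _ _ rfl rfl with ⟨⟨h1, h2⟩, -⟩ | ⟨⟨h1, h2⟩, -⟩ <;> omega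
  have hij := long (hp ▸ h)
  have hji := long (Sym2.eq_swap ▸ hp ▸ h)
  have one_le : (1 : ZMod n).val ≤ 1 := (ZMod.val_one_eq_one_mod n).trans_le (Nat.mod_le 1 n)
  refine ⟨?_, ?_, ?_⟩ <;> rintro rfl
  · simp only [sub_sub_cancel] at hji
    omega
  · simp at hij
  · simp only [add_sub_cancel_left] at hij
    omega

theorem crosses_mk_zero_iff [NeZero n] (a b m : ZMod n) :
    Crosses n s(a, b) s(0, m) ↔ (0 < a.val ∧ a.val < m.val ∧ m.val < b.val) ∨
      (0 < b.val ∧ b.val < m.val ∧ m.val < a.val) := by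
  constructor
  · intro h
    have h1 := xor_def.mp (h a b 0 m rfl rfl)
    have h2 := xor_def.mp (h b a 0 m Sym2.eq_swap rfl)
    simp only [cycBtw_iff_val, ZMod.val_zero] at h1 h2
    omega
  · rintro hab i j k l hp hq
    rcases Sym2.eq_iff.mp hp with ⟨rfl, rfl⟩ | ⟨rfl, rfl⟩ <;>
      rcases Sym2.eq_iff.mp hq with ⟨rfl, rfl⟩ | ⟨rfl, rfl⟩ <;>
      exact xor_def.mpr (by simp only [cycBtw_iff_val, ZMod.val_zero]; omega)

theorem filter_crosses_mk_zero_eq_image [NeZero n] {ℓ : ℕ} (hℓ : ℓ < n) :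
    (chords n).filter (fun e => Crosses n e s((0 : ZMod n), (ℓ : ZMod n)))
      = (Ico 1 ℓ ×ˢ Ico (ℓ + 1) n).image
          fun p : ℕ × ℕ => s((p.1 : ZMod n), (p.2 : ZMod n)) := by
  ext e
  induction e using Sym2.ind with | _ a b => ?_
  simp only [chords, mem_filter, mem_univ, true_and]
  rw [and_iff_right_of_imp isChord_of_crosses, crosses_mk_zero_iff, ZMod.val_natCast_of_lt hℓ]
  simp only [mem_image, mem_product, mem_Ico, Prod.exists]
  constructor
  · have := a.val_lt
    have := b.val_lt
    rintro (h | h)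
    · exact ⟨a.val, b.val, by omega, by simp⟩
    · exact ⟨b.val, a.val, by omega, by simp [Sym2.eq_swap]⟩
  · rintro ⟨X, Y, hXY, he⟩
    rcases Sym2.eq_iff.mp he with ⟨rfl, rfl⟩ | ⟨rfl, rfl⟩ <;>
      rw [ZMod.val_natCast_of_lt (by omega), ZMod.val_natCast_of_lt (by omega)] <;> omega

theorem injOn_sym2_mk_natCast :
    Set.InjOn (fun p : ℕ × ℕ => s((p.1 : ZMod n), (p.2 : ZMod n)))
      {p | p.1 < p.2 ∧ p.2 < n} := by
  rintro ⟨X, Y⟩ ⟨hXY, hY⟩ ⟨X', Y'⟩ ⟨hXY', hY'⟩ h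
  have inj := CharP.natCast_injOn_Iio (ZMod n) n
  rcases Sym2.eq_iff.mp h with ⟨h1, h2⟩ | ⟨h1, h2⟩
  · exact Prod.ext (inj (by simp; omega) (by simp; omega) h1)
      (inj (by simp; omega) (by simp; omega) h2)
  · have := inj (by simp; omega) (by simp; omega) h1
    have := inj (by simp; omega) (by simp; omega) h2
    omega

theorem inv_u_natCast_mk {K : Type*} [Field K] (z : ZMod n → K) (i j : ℕ) :
    (u z s((i : ZMod n), (j : ZMod n)))⁻¹
      = (z i - z j) * (z ↑(i + 1) - z ↑(j + 1)) / ((z i - z ↑(j + 1)) * (z ↑(i + 1) - z j)) := by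
  rw [u_mk, inv_div]
  push_cast
  ring

theorem prod_inv_u_filter_crosses_mk_zero [NeZero n] {K : Type*} [Field K] {z : ZMod n → K}
    (hz : Function.Injective z) {ℓ : ℕ} (hℓ : 1 ≤ ℓ) (hℓn : ℓ < n) :
    ∏ e ∈ (chords n).filter (fun e => Crosses n e s((0 : ZMod n), (ℓ : ZMod n))), (u z e)⁻¹
      = (z 1 - z (ℓ + 1)) * (z ℓ - z 0) / ((z 1 - z 0) * (z ℓ - z (ℓ + 1))) := by
  have hF : ∀ i ∈ Icc 1 ℓ, ∀ j ∈ Icc (ℓ + 1) n, z i - z j ≠ 0 := by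
    intro i hi j hj
    simp only [mem_Icc] at hi hj
    rw [sub_ne_zero, hz.ne_iff, ← ZMod.natCast_mod j n]
    refine (CharP.natCast_injOn_Iio (ZMod n) n).ne (by simp; omega) (Nat.mod_lt _ (by omega)) ?_
    rcases hj.2.lt_or_eq with hjn | rfl
    · rw [Nat.mod_eq_of_lt hjn]; omega
    · rw [Nat.mod_self]; omega
  rw [filter_crosses_mk_zero_eq_image hℓn,
    prod_image (injOn_sym2_mk_natCast.mono fun p hp => by simp at hp ⊢; omega), prod_product]
  simp only [inv_u_natCast_mk]
  rw [prod_Ico_prod_Ico_div_of_ne_zero (fun i j => z i - z j) hℓ (by omega) hF]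
  push_cast [ZMod.natCast_self]
  rfl

/-- The row `v_{n1} ↦ -u_{nℓ} ∏_{kj ≁ nℓ} u_{kj}⁻¹` of the monomial map
`φ_{(1ℓ)}`, as an identity of functions of the configuration `z`. -/
theorem monomial_map_row_n_one (n ℓ : ℕ) [NeZero n] (hl3 : 3 ≤ ℓ) (hln : ℓ ≤ n - 2)
    (z : ZMod n → ℝ) (hz : Function.Injective z) :
    u (fun k => z (Equiv.swap (1 : ZMod n) (ℓ : ZMod n) k))
        s((0 : ZMod n), (ℓ : ZMod n))
      = - u z s((0 : ZMod n), (ℓ : ZMod n)) *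
          ∏ e ∈ (chords n).filter
            (fun e => Crosses n e s((0 : ZMod n), (ℓ : ZMod n))), (u z e)⁻¹ := by
  have hcast : ∀ i j : ℕ, i < n → j < n → i ≠ j → (i : ZMod n) ≠ j := fun i j hi hj =>
    (CharP.natCast_injOn_Iio (ZMod n) n).ne hi hj
  have h01 : (0 : ZMod n) ≠ 1 := by simpa using hcast 0 1 (by omega) (by omega) (by omega)
  have h0ℓ : (0 : ZMod n) ≠ ℓ := by simpa using hcast 0 ℓ (by omega) (by omega) (by omega)
  have h1ℓ : (1 : ZMod n) ≠ ℓ := by simpa using hcast 1 ℓ (by omega) (by omega) (by omega)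
  have h0ℓ' : (0 : ZMod n) ≠ ℓ + 1 := by
    simpa using hcast 0 (ℓ + 1) (by omega) (by omega) (by omega)
  have h1ℓ' : (1 : ZMod n) ≠ ℓ + 1 := by
    simpa using hcast 1 (ℓ + 1) (by omega) (by omega) (by omega)
  have hℓℓ' : (ℓ : ZMod n) ≠ ℓ + 1 := by
    simpa using hcast ℓ (ℓ + 1) (by omega) (by omega) (by omega)
  rw [prod_inv_u_filter_crosses_mk_zero hz (by omega) (by omega), u_mk, u_mk, zero_add,
    Equiv.swap_apply_of_ne_of_ne h01 h0ℓ, Equiv.swap_apply_left, Equiv.swap_apply_right,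
    Equiv.swap_apply_of_ne_of_ne h1ℓ'.symm hℓℓ'.symm]
  have hne : ∀ {a b : ZMod n}, a ≠ b → z a - z b ≠ 0 := fun h => sub_ne_zero.2 (hz.ne h)
  field_simp [hne h01, hne h01.symm, hne h0ℓ, hne h1ℓ, hne h0ℓ', hne h1ℓ', hne hℓℓ']
  ring

end M0n
end
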